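/- arXiv:2102.02243 — 2 statements merged into one kernel-verified Lean document; each statement's English description precedes it below -/
import Mathlib

section
/- Let X and Z be jointly distributed random variables on finite sets, let {h_s : 𝒳 → {0,1}^t}_{s∈𝒮} and {h′_{s′} : 𝒳 → {0,1}^ℓ}_{s′∈𝒮′} be strong universal hash families, and let S, S′ be uniformly distributed on 𝒮, 𝒮′ respectively, mutually independent and independent of (X, Z); let U_ℓ be uniform on {0,1}^ℓ and independent of everything else. If 0 < σ ≤ 1 and ℓ ≤ H̃∞(X|Z) − t + 2·log₂ σ + 2, then SD((Z, h_S(X), S, S′, h′_{S′}(X)); (Z, h_S(X), S, S′, U_ℓ)) ≤ σ. That is, the key h′_{S′}(X) produced by the OWSKA-based iKEM with ciphertext (h_S(X), S′, S) is σ-indistinguishable from uniform given the adversary's view, i.e., the iKEM is σ-IND-OT secure. -/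
/-!
Fix the eavesdropper's view `(z, y, s)` of `(Z, h_S(X), S)`. Counting collisions of the strong
universal family `h'` bounds the second moment of the deviation of `h'_{S'}(X)` from uniform by
the collision mass `∑ₓ p(x, z)² ≤ M_z ∑ₓ p(x, z)`, where `M_z = maxₓ p(x, z)`. Cauchy–Schwarz
turns this into an `L¹` bound, and a second Cauchy–Schwarz over all views gives
`SD ≤ ½ √(2^ℓ 2^t ∑_z M_z) = ½ √(2^(ℓ + t − H̃∞(X|Z)))`, which is at most `σ` under the hypothesis
on `ℓ`.
-/

open scoped BigOperators Classical

/-- Statistical distance `SD(p;q) = max_{W ⊆ T} (Pr_p[W] − Pr_q[W])`. -/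
noncomputable def SD {T : Type*} [Fintype T] (p q : T → ℝ) : ℝ :=
  Finset.univ.sup' Finset.univ_nonempty (fun W : Finset T => ∑ t ∈ W, p t - ∑ t ∈ W, q t)

/-- Average conditional min-entropy `H̃∞(A|B) = -log₂ Σ_b max_a Pr[A = a, B = b]`. -/
noncomputable def Havg {A B : Type*} [Fintype A] [Fintype B] [Nonempty A] (p : A × B → ℝ) : ℝ :=
  - Real.logb 2 (∑ b : B, Finset.univ.sup' Finset.univ_nonempty (fun a : A => p (a, b)))

/-- A strong universal hash family. -/
def StrongUHF {S X Y : Type*} [Fintype S] [Fintype Y] (h : S → X → Y) : Prop :=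
  ∀ x x' : X, x ≠ x' → ∀ a b : Y,
    ((Finset.univ.filter (fun s : S => h s x = a ∧ h s x' = b)).card : ℝ) / Fintype.card S
      = 1 / (Fintype.card Y : ℝ) ^ 2

open Finset

theorem SD_le_half_sum_abs_sub {T : Type*} [Fintype T] {p q : T → ℝ}
    (hpq : ∑ t, (p t - q t) = 0) : SD p q ≤ (∑ t, |p t - q t|) / 2 := by
  have hpos : ∑ t, (p t - q t)⁺ = (∑ t, |p t - q t|) / 2 := by
    have h (d : ℝ) : d⁺ = (|d| + d) / 2 := by
      linarith [posPart_add_negPart d, posPart_sub_negPart d]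
    simp only [h, ← sum_div, sum_add_distrib, hpq, add_zero]
  refine sup'_le _ _ fun W _ => ?_
  calc ∑ t ∈ W, p t - ∑ t ∈ W, q t = ∑ t ∈ W, (p t - q t) := (sum_sub_distrib ..).symm
    _ ≤ ∑ t ∈ W, (p t - q t)⁺ := sum_le_sum fun _ _ => le_posPart _
    _ ≤ ∑ t, (p t - q t)⁺ :=
      sum_le_sum_of_subset_of_nonneg W.subset_univ fun _ _ _ => posPart_nonneg _
    _ = _ := hpos

theorem sum_sq_sub_sum_div_card {K : Type*} [Fintype K] (a : K → ℝ) :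
    ∑ k, (a k - (∑ j, a j) / Fintype.card K) ^ 2
      = ∑ k, a k ^ 2 - (∑ k, a k) ^ 2 / Fintype.card K := by
  set m := ∑ j, a j
  have hN : (Fintype.card K : ℝ) * (m / Fintype.card K) ^ 2 = m ^ 2 / Fintype.card K := by
    rcases eq_or_ne (Fintype.card K : ℝ) 0 with h0 | h0
    · simp [h0]
    · field_simp
  simp only [sub_sq, sum_add_distrib, sum_sub_distrib, ← sum_mul, ← mul_sum, sum_const,
    card_univ, nsmul_eq_mul, hN]
  ring

theorem sum_fiberwise_sub_div_card_eq_zero {X K : Type*} [Fintype K] [DecidableEq K]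
    [Nonempty K] (F : Finset X) (g : X → K) (w : X → ℝ) :
    ∑ k, (∑ x ∈ F with g x = k, w x - (∑ x ∈ F, w x) / Fintype.card K) = 0 := by
  rw [sum_sub_distrib, sum_fiberwise, sum_const, card_univ, nsmul_eq_mul,
    mul_div_cancel₀ _ (by positivity), sub_self]

theorem sum_sq_sum_fiberwise {X K : Type*} [Fintype K] [DecidableEq K] (F : Finset X) (g : X → K)
    (c : X → ℝ) :
    ∑ k, (∑ x ∈ F with g x = k, c x) ^ 2 = ∑ x ∈ F, ∑ y ∈ F with g y = g x, c x * c y := by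
  calc ∑ k, (∑ x ∈ F with g x = k, c x) ^ 2
      = ∑ k, ∑ x ∈ F with g x = k, c x * ∑ y ∈ F with g y = g x, c y := by
        refine sum_congr rfl fun k _ => ?_
        rw [sq, sum_mul]
        exact sum_congr rfl fun x hx => by rw [(mem_filter.1 hx).2]
    _ = ∑ x ∈ F, ∑ y ∈ F with g y = g x, c x * c y := by
        rw [sum_fiberwise F g fun x => c x * ∑ y ∈ F with g y = g x, c y]
        simp only [mul_sum]

theorem sum_sum_sum_sqrt_mul_le {Z Y S : Type*} [Fintype Z] [Fintype Y] [Fintype S]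
    {M : Z → ℝ} {B : Z → Y → S → ℝ} (hM : ∀ z, 0 ≤ M z) (hB : ∀ z y s, 0 ≤ B z y s) :
    ∑ z, ∑ y, ∑ s, √(M z * B z y s)
      ≤ √(Fintype.card Y * Fintype.card S * ∑ z, M z) * √(∑ z, ∑ y, ∑ s, B z y s) := by
  have h := Real.sum_sqrt_mul_sqrt_le (univ : Finset (Z × Y × S)) (f := fun w => M w.1)
    (g := fun w => B w.1 w.2.1 w.2.2) (fun w => hM w.1) (fun w => hB _ _ _)
  simp only [Fintype.sum_prod_type, sum_const, card_univ, nsmul_eq_mul, Fintype.card_prod,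
    Nat.cast_mul] at h
  simpa only [Real.sqrt_mul (hM _), ← mul_sum, mul_assoc] using h

theorem sqrt_two_pow_mul_two_pow_mul_le {ℓ t : ℕ} {a σ : ℝ} (hσ : 0 < σ)
    (h : (ℓ : ℝ) ≤ -Real.logb 2 a - t + 2 * Real.logb 2 σ + 2) :
    √(2 ^ ℓ * 2 ^ t * a) ≤ 2 * σ := by
  rcases le_or_gt a 0 with ha | ha
  · rw [Real.sqrt_eq_zero_of_nonpos (mul_nonpos_of_nonneg_of_nonpos (by positivity) ha)]
    positivity
  refine Real.sqrt_le_iff.2 ⟨by positivity, ?_⟩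
  rw [← Real.logb_le_logb one_lt_two (by positivity) (by positivity)]
  rw [Real.logb_mul (by positivity) ha.ne', Real.logb_mul (by positivity) (by positivity),
    Real.logb_pow, Real.logb_pow, Real.logb_pow, Real.logb_mul two_ne_zero hσ.ne',
    Real.logb_self_eq_one one_lt_two]
  push_cast
  linarith

theorem StrongUHF.card_collision {S X Y : Type*} [Fintype S] [Fintype Y] [DecidableEq Y]
    {h : S → X → Y} (hh : StrongUHF h) {x x' : X} (hx : x ≠ x') :
    (#{s | h s x = h s x'} : ℝ) = Fintype.card S / Fintype.card Y := by
  have hfiber (b : Y) :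
      (#{s | h s x = b ∧ h s x' = b} : ℝ) = Fintype.card S / Fintype.card Y ^ 2 := by
    have hS : (Fintype.card S : ℝ) = 0 → (#{s | h s x = b ∧ h s x' = b} : ℝ) = 0 := by
      have := card_le_univ {s | h s x = b ∧ h s x' = b}
      intro h0; norm_cast at h0 ⊢; omega
    have hb : (#{s | h s x = b ∧ h s x' = b} : ℝ) / Fintype.card S = 1 / Fintype.card Y ^ 2 := by
      -- `StrongUHF` filters with the classical decidability instance
      convert hh x x' hx b b
    rw [← div_mul_cancel_of_imp hS, hb]
    ring
  have hsplit : #{s | h s x = h s x'} = ∑ b, #{s | h s x = b ∧ h s x' = b} := by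
    rw [card_eq_sum_card_fiberwise (f := fun s => h s x) (t := univ) (by simp)]
    refine sum_congr rfl fun b _ => congrArg card ?_
    ext s
    simp only [mem_filter, mem_univ, true_and]
    grind
  rw [hsplit]
  push_cast
  simp only [hfiber, sum_const, card_univ, nsmul_eq_mul]
  rcases eq_or_ne (Fintype.card Y : ℝ) 0 with h0 | h0
  · simp [h0]
  · field_simp

theorem StrongUHF.sum_sum_sum_collision {S X K : Type*} [Fintype S] [Fintype K] [DecidableEq K]
    {h : S → X → K} (hh : StrongUHF h) (F : Finset X) (c : X → ℝ) :
    ∑ s, ∑ x ∈ F, ∑ y ∈ F with h s y = h s x, c x * c y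
      = Fintype.card S / Fintype.card K * (∑ x ∈ F, c x) ^ 2
        + (Fintype.card S - Fintype.card S / Fintype.card K) * ∑ x ∈ F, c x ^ 2 := by
  set q := (Fintype.card S : ℝ)
  set N := (Fintype.card K : ℝ)
  have hcount (x y : X) : (#{s | h s y = h s x} : ℝ) = if x = y then q else q / N := by
    split_ifs with hxy
    · simp [hxy, q]
    · exact hh.card_collision (Ne.symm hxy)
  calc ∑ s, ∑ x ∈ F, ∑ y ∈ F with h s y = h s x, c x * c y
      = ∑ x ∈ F, ∑ y ∈ F, c x * c y * #{s | h s y = h s x} := by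
        simp only [sum_filter, card_filter, Nat.cast_sum, mul_sum]
        rw [sum_comm]; refine sum_congr rfl fun x _ => ?_
        rw [sum_comm]; refine sum_congr rfl fun y _ => ?_
        refine sum_congr rfl fun s _ => ?_
        split_ifs <;> simp
    _ = ∑ x ∈ F, ∑ y ∈ F, (q / N * (c x * c y) + if x = y then (q - q / N) * c x ^ 2 else 0) := by
        refine sum_congr rfl fun x _ => sum_congr rfl fun y _ => ?_
        rw [hcount]; split_ifs with hxy
        · subst hxy; ring
        · ring
    _ = q / N * (∑ x ∈ F, c x) ^ 2 + (q - q / N) * ∑ x ∈ F, c x ^ 2 := by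
        simp only [sum_add_distrib, ← mul_sum, sum_ite_eq]
        rw [sum_congr rfl fun x hx => if_pos hx, ← sum_mul, ← mul_sum, sq]

theorem StrongUHF.sum_sum_sq_sub_le {S X K : Type*} [Fintype S] [Fintype K] [DecidableEq K]
    {h : S → X → K} (hh : StrongUHF h) (F : Finset X) (c : X → ℝ) :
    ∑ s, ∑ k, (∑ x ∈ F with h s x = k, c x - (∑ x ∈ F, c x) / Fintype.card K) ^ 2
      ≤ Fintype.card S * ∑ x ∈ F, c x ^ 2 := by
  set q := (Fintype.card S : ℝ)
  set N := (Fintype.card K : ℝ)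
  set m := ∑ x ∈ F, c x
  have hrow (s : S) : ∑ k, (∑ x ∈ F with h s x = k, c x - m / N) ^ 2
      = ∑ k, (∑ x ∈ F with h s x = k, c x) ^ 2 - m ^ 2 / N := by
    simpa only [sum_fiberwise] using sum_sq_sub_sum_div_card fun k => ∑ x ∈ F with h s x = k, c x
  calc ∑ s, ∑ k, (∑ x ∈ F with h s x = k, c x - m / N) ^ 2
      = ∑ s, ∑ k, (∑ x ∈ F with h s x = k, c x) ^ 2 - q * (m ^ 2 / N) := by
        simp only [hrow, sum_sub_distrib, sum_const, card_univ, nsmul_eq_mul, q]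
    _ = (q - q / N) * ∑ x ∈ F, c x ^ 2 := by
        simp only [sum_sq_sum_fiberwise, hh.sum_sum_sum_collision, m]
        ring
    _ ≤ q * ∑ x ∈ F, c x ^ 2 := by
        rw [sub_mul]
        exact sub_le_self _ (by positivity)

theorem StrongUHF.sum_sum_abs_sub_le {S X K : Type*} [Fintype S] [Fintype K] [DecidableEq K]
    {h : S → X → K} (hh : StrongUHF h) (F : Finset X) (c : X → ℝ) :
    ∑ s, ∑ k, |∑ x ∈ F with h s x = k, c x - (∑ x ∈ F, c x) / Fintype.card K|
      ≤ Fintype.card S * √(Fintype.card K * ∑ x ∈ F, c x ^ 2) := by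
  set q := (Fintype.card S : ℝ)
  set N := (Fintype.card K : ℝ)
  set D := fun s k => ∑ x ∈ F with h s x = k, c x - (∑ x ∈ F, c x) / N
  have hsq : (∑ s, ∑ k, |D s k|) ^ 2 ≤ q ^ 2 * (N * ∑ x ∈ F, c x ^ 2) :=
    calc (∑ s, ∑ k, |D s k|) ^ 2 ≤ q * ∑ s, (∑ k, |D s k|) ^ 2 := by
          have := sq_sum_le_card_mul_sum_sq (s := univ) (f := fun s => ∑ k, |D s k|)
          rwa [card_univ] at this
      _ ≤ q * ∑ s, N * ∑ k, D s k ^ 2 := by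
          gcongr with s
          have := sq_sum_le_card_mul_sum_sq (s := univ) (f := fun k => |D s k|)
          rwa [card_univ, sum_congr rfl fun k _ => sq_abs (D s k)] at this
      _ ≤ q * (N * (q * ∑ x ∈ F, c x ^ 2)) := by
          rw [← mul_sum]
          gcongr
          exact hh.sum_sum_sq_sub_le F c
      _ = q ^ 2 * (N * ∑ x ∈ F, c x ^ 2) := by ring
  calc ∑ s, ∑ k, |D s k| ≤ √(q ^ 2 * (N * ∑ x ∈ F, c x ^ 2)) := Real.le_sqrt_of_sq_le hsq
    _ = q * √(N * ∑ x ∈ F, c x ^ 2) := by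
        rw [Real.sqrt_mul (sq_nonneg q), Real.sqrt_sq (Nat.cast_nonneg _)]

theorem StrongUHF.sum_abs_sub_le_sqrt_of_le {X Z Y S S' K : Type*} [Fintype X] [Nonempty X]
    [Fintype Z] [Fintype Y] [DecidableEq Y] [Fintype S] [Fintype S'] [Fintype K] [DecidableEq K]
    (h : S → X → Y) {h' : S' → X → K} (hh' : StrongUHF h') {p : X × Z → ℝ} (hp : ∀ x, 0 ≤ p x)
    (hsum : ∑ x, p x = 1) {M : Z → ℝ} (hpM : ∀ x z, p (x, z) ≤ M z) :
    ∑ z, ∑ y, ∑ s, ∑ s', ∑ k,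
        |∑ x ∈ {x | h s x = y} with h' s' x = k, p (x, z)
          - (∑ x with h s x = y, p (x, z)) / Fintype.card K|
      ≤ Fintype.card S * Fintype.card S'
          * √(Fintype.card K * Fintype.card Y * ∑ z, M z) := by
  set q := (Fintype.card S : ℝ)
  set N := (Fintype.card K : ℝ)
  set B : Z → Y → S → ℝ := fun z y s => ∑ x with h s x = y, p (x, z)
  have hM0 (z : Z) : 0 ≤ M z := (hp _).trans (hpM (Classical.arbitrary X) z)
  have hBsum : ∑ z, ∑ y, ∑ s, B z y s = q := by
    calc ∑ z, ∑ y, ∑ s, B z y s = ∑ z, ∑ _s : S, ∑ x, p (x, z) := by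
          refine sum_congr rfl fun z _ => ?_
          rw [sum_comm]
          simp only [B, sum_fiberwise]
      _ = q := by
          rw [sum_comm, ← Fintype.sum_prod_type_right, hsum, sum_const, card_univ, nsmul_one]
  have hfiber (z y s) : ∑ s', ∑ k, |∑ x ∈ {x | h s x = y} with h' s' x = k, p (x, z)
      - B z y s / N| ≤ Fintype.card S' * (√N * √(M z * B z y s)) := by
    refine (hh'.sum_sum_abs_sub_le {x | h s x = y} fun x => p (x, z)).trans ?_
    rw [← Real.sqrt_mul (Nat.cast_nonneg _)]
    gcongr
    calc ∑ x with h s x = y, p (x, z) ^ 2 ≤ ∑ x with h s x = y, M z * p (x, z) := by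
          gcongr with x; rw [sq]; exact mul_le_mul_of_nonneg_right (hpM x z) (hp _)
      _ = M z * B z y s := (mul_sum ..).symm
  have hM : 0 ≤ ∑ z, M z := sum_nonneg fun z _ => hM0 z
  calc _ ≤ ∑ z, ∑ y, ∑ s, Fintype.card S' * (√N * √(M z * B z y s)) := by
        gcongr with z _ y _ s _; exact hfiber z y s
    _ = Fintype.card S' * √N * ∑ z, ∑ y, ∑ s, √(M z * B z y s) := by
        simp only [mul_sum, mul_assoc]
    _ ≤ Fintype.card S' * √N * (√(Fintype.card Y * q * ∑ z, M z) * √q) := by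
        gcongr
        simpa only [hBsum] using
          sum_sum_sum_sqrt_mul_le (B := B) hM0 fun z y s => sum_nonneg fun _ _ => hp _
    _ = _ := by
        rw [mul_assoc, ← Real.sqrt_mul (by positivity), ← Real.sqrt_mul (by positivity),
          show N * ((Fintype.card Y * q * ∑ z, M z) * q)
            = q ^ 2 * (N * Fintype.card Y * ∑ z, M z) by ring,
          Real.sqrt_mul (sq_nonneg _), Real.sqrt_sq (by positivity)]
        ring

theorem owska_ikem_ind_ot_general
    {X Z S S' : Type*} [Fintype X] [Fintype Z] [Fintype S] [Fintype S']
    [Nonempty X] [Nonempty S] [Nonempty S']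
    (t ℓ : ℕ)
    (h : S → X → (Fin t → Bool)) (h' : S' → X → (Fin ℓ → Bool))
    (hUHF' : StrongUHF h')
    (p : X × Z → ℝ) (hp : ∀ x, 0 ≤ p x) (hsum : ∑ x : X × Z, p x = 1)
    (σ : ℝ) (hσ0 : 0 < σ)
    (hℓ : (ℓ : ℝ) ≤ Havg p - t + 2 * Real.logb 2 σ + 2) :
    SD
        -- distribution of (Z, h_S(X), S, S′, h′_{S′}(X))
        (fun w : Z × (Fin t → Bool) × S × S' × (Fin ℓ → Bool) =>
          (∑ x ∈ Finset.univ.filter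
              (fun x : X => h w.2.2.1 x = w.2.1 ∧ h' w.2.2.2.1 x = w.2.2.2.2),
            p (x, w.1)) / ((Fintype.card S : ℝ) * Fintype.card S'))
        -- distribution of (Z, h_S(X), S, S′, U_ℓ)
        (fun w : Z × (Fin t → Bool) × S × S' × (Fin ℓ → Bool) =>
          (∑ x ∈ Finset.univ.filter (fun x : X => h w.2.2.1 x = w.2.1), p (x, w.1))
            / ((Fintype.card S : ℝ) * Fintype.card S' * 2 ^ ℓ))
      ≤ σ := by
  set q := (Fintype.card S : ℝ)
  set q' := (Fintype.card S' : ℝ)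
  have hcard (n : ℕ) : (Fintype.card (Fin n → Bool) : ℝ) = 2 ^ n := by simp
  have hdiff (a b : ℝ) : a / (q * q') - b / (q * q' * Fintype.card (Fin ℓ → Bool))
      = (a - b / Fintype.card (Fin ℓ → Bool)) / (q * q') := by ring
  refine (SD_le_half_sum_abs_sub ?_).trans ?_
  · simp only [← hcard, Fintype.sum_prod_type, hdiff, ← sum_div, ← filter_filter,
      sum_fiberwise_sub_div_card_eq_zero, zero_div, sum_const_zero]
  · simp only [← hcard, Fintype.sum_prod_type, hdiff, abs_div,
      abs_of_pos (by positivity : 0 < q * q'), ← sum_div, ← filter_filter]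
    rw [div_div, div_le_iff₀ (by positivity)]
    calc _ ≤ q * q' * √(Fintype.card (Fin ℓ → Bool) * Fintype.card (Fin t → Bool)
          * ∑ z, univ.sup' univ_nonempty fun x => p (x, z)) :=
          hUHF'.sum_abs_sub_le_sqrt_of_le h hp hsum fun x z =>
            le_sup' (fun x => p (x, z)) (mem_univ x)
      _ ≤ q * q' * (2 * σ) := by
          gcongr
          rw [hcard, hcard]
          exact sqrt_two_pow_mul_two_pow_mul_le hσ0 hℓ
      _ = σ * (q * q' * 2) := by ring

/-- Theorem 1, IND-OT security of the OWSKA-based iKEM: if `0 < σ ≤ 1` and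
`ℓ ≤ H̃∞(X|Z) − t + 2 log₂ σ + 2`, then the key `h′_{S′}(X)` is σ-indistinguishable from
uniform given the adversary's view `(Z, h_S(X), S, S′)`:
`SD((Z, h_S(X), S, S′, h′_{S′}(X)); (Z, h_S(X), S, S′, U_ℓ)) ≤ σ`. -/
theorem owska_ikem_ind_ot
    {X Z S S' : Type*} [Fintype X] [Fintype Z] [Fintype S] [Fintype S']
    [Nonempty X] [Nonempty S] [Nonempty S']
    (t ℓ : ℕ)
    (h : S → X → (Fin t → Bool)) (h' : S' → X → (Fin ℓ → Bool))
    (hUHF : StrongUHF h) (hUHF' : StrongUHF h')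
    (p : X × Z → ℝ) (hp : ∀ x, 0 ≤ p x) (hsum : ∑ x : X × Z, p x = 1)
    (σ : ℝ) (hσ0 : 0 < σ) (hσ1 : σ ≤ 1)
    (hℓ : (ℓ : ℝ) ≤ Havg p - t + 2 * Real.logb 2 σ + 2) :
    SD
        -- distribution of (Z, h_S(X), S, S′, h′_{S′}(X))
        (fun w : Z × (Fin t → Bool) × S × S' × (Fin ℓ → Bool) =>
          (∑ x ∈ Finset.univ.filter
              (fun x : X => h w.2.2.1 x = w.2.1 ∧ h' w.2.2.2.1 x = w.2.2.2.2),
            p (x, w.1)) / ((Fintype.card S : ℝ) * Fintype.card S'))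
        -- distribution of (Z, h_S(X), S, S′, U_ℓ)
        (fun w : Z × (Fin t → Bool) × S × S' × (Fin ℓ → Bool) =>
          (∑ x ∈ Finset.univ.filter (fun x : X => h w.2.2.1 x = w.2.1), p (x, w.1))
            / ((Fintype.card S : ℝ) * Fintype.card S' * 2 ^ ℓ))
      ≤ σ :=
  owska_ikem_ind_ot_general t ℓ h h' hUHF' p hp hsum σ hσ0 hℓ
end

section
/- (One-time composition: IND-OT iKEM + IND-OT DEM ⇒ IND-OT hybrid encryption.) Let (X, Z) be jointly distributed random variables on finite sets, let R be uniformly distributed on a finite set and independent of (X, Z), and let Enc : 𝒳 × ℛ → 𝒞₁ × {0,1}^ℓ be the iKEM encapsulation; write (C₁, K) = Enc(X, R). Let D : {0,1}^ℓ × ℳ → 𝒞₂ be a deterministic DEM encryption over a finite message set ℳ. Assume: (i) SD((Z, C₁, K); (Z, C₁, U_ℓ)) ≤ σ, where U_ℓ is uniform on {0,1}^ℓ independent of (Z, C₁); and (ii) for all m₀, m₁ ∈ ℳ and every function f : 𝒞₂ → {0,1}, |Pr_{k ← U_ℓ, b ← U_1}[f(D(k, m_b)) = b] − 1/2| ≤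 σ′. Then for every adversary given by functions A₁ : 𝒵 → ℳ × ℳ × 𝒮t and A₂ : 𝒮t × 𝒞₁ × 𝒞₂ → {0,1}, setting (m₀, m₁, st) = A₁(Z) and letting b be a uniform bit independent of everything else, |Pr[A₂(st, C₁, D(K, m_b)) = b] − 1/2| ≤ σ + σ′. -/
open scoped BigOperators Classical

section StatisticalDistance

variable {T : Type*} [Fintype T]

theorem sum_sub_sum_le_SD (p q : T → ℝ) (W : Finset T) :
    ∑ t ∈ W, p t - ∑ t ∈ W, q t ≤ SD p q :=
  Finset.le_sup' (fun W : Finset T => ∑ t ∈ W, p t - ∑ t ∈ W, q t) (Finset.mem_univ W)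

theorem sum_mul_sub_sum_mul_le_SD (p q g : T → ℝ) (hg₀ : ∀ t, 0 ≤ g t) (hg₁ : ∀ t, g t ≤ 1) :
    ∑ t, p t * g t - ∑ t, q t * g t ≤ SD p q := by
  let W := Finset.univ.filter fun t => q t ≤ p t
  calc ∑ t, p t * g t - ∑ t, q t * g t
      = ∑ t, (p t - q t) * g t := by rw [← Finset.sum_sub_distrib]; simp only [sub_mul]
    _ ≤ ∑ t, if q t ≤ p t then p t - q t else 0 := by
      gcongr with t
      split_ifs with h
      · nlinarith [hg₁ t]
      · nlinarith [hg₀ t]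
    _ = ∑ t ∈ W, p t - ∑ t ∈ W, q t := by rw [← Finset.sum_filter, Finset.sum_sub_distrib]
    _ ≤ SD p q := sum_sub_sum_le_SD p q W

theorem abs_sum_mul_sub_sum_mul_le_SD (p q g : T → ℝ) (hpq : ∑ t, p t = ∑ t, q t)
    (hg₀ : ∀ t, 0 ≤ g t) (hg₁ : ∀ t, g t ≤ 1) :
    |∑ t, p t * g t - ∑ t, q t * g t| ≤ SD p q := by
  refine abs_le.mpr ⟨?_, sum_mul_sub_sum_mul_le_SD p q g hg₀ hg₁⟩
  -- With equal masses, `q - p` tested against `g` is `p - q` tested against `1 - g`.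
  have hflip : ∑ t, q t * g t - ∑ t, p t * g t =
      ∑ t, p t * (1 - g t) - ∑ t, q t * (1 - g t) := by
    simp only [mul_sub, mul_one, Finset.sum_sub_distrib, hpq]
    ring
  have := sum_mul_sub_sum_mul_le_SD p q (fun t => 1 - g t) (fun t => sub_nonneg.2 (hg₁ t))
    (fun t => sub_le_self _ (hg₀ t))
  linarith

end StatisticalDistance

theorem abs_sum_mul_sub_le_of_forall_abs_sub_le {ι : Type*} [Fintype ι] {a f : ι → ℝ} {c ε : ℝ}
    (ha : ∀ i, 0 ≤ a i) (ha₁ : ∑ i, a i = 1) (hf : ∀ i, |f i - c| ≤ ε) :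
    |∑ i, a i * f i - c| ≤ ε :=
  calc |∑ i, a i * f i - c| = |∑ i, a i * (f i - c)| := by
        simp only [mul_sub, Finset.sum_sub_distrib, ← Finset.sum_mul, ha₁, one_mul]
    _ ≤ ∑ i, a i * ε := by
        refine (Finset.abs_sum_le_sum_abs _ _).trans (Finset.sum_le_sum fun i _ => ?_)
        rw [abs_mul, abs_of_nonneg (ha i)]
        exact mul_le_mul_of_nonneg_left (hf i) (ha i)
    _ = ε := by rw [← Finset.sum_mul, ha₁, one_mul]

theorem sum_pushforward_mul {α β : Type*} [Fintype α] [Fintype β] [DecidableEq β]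
    (μ : α → ℝ) (F : α → β) (h : β → ℝ) :
    ∑ b, (∑ a, μ a * if F a = b then 1 else 0) * h b = ∑ a, μ a * h (F a) := by
  simp only [Finset.sum_mul, mul_ite, mul_one, mul_zero, ite_mul, zero_mul]
  rw [Finset.sum_comm]
  simp

namespace KEM

variable {𝒳 𝒵 ℛ 𝒞₁ : Type*} [Fintype ℛ] {ℓ : ℕ}

/-- The law of `(X, Z, R)`, with `R` uniform and independent of `(X, Z)`. -/
noncomputable def jointLaw (p : 𝒳 × 𝒵 → ℝ) (t : 𝒳 × 𝒵 × ℛ) : ℝ :=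
  p (t.1, t.2.1) / Fintype.card ℛ

/-- The law of `(Z, C₁, K)`, where `(C₁, K) = Enc (X, R)`. -/
noncomputable def realLaw [Fintype 𝒳] (p : 𝒳 × 𝒵 → ℝ) (Enc : 𝒳 × ℛ → 𝒞₁ × (Fin ℓ → Bool))
    (w : 𝒵 × 𝒞₁ × (Fin ℓ → Bool)) : ℝ :=
  ∑ x : 𝒳, ∑ r : ℛ, (p (x, w.1) / (Fintype.card ℛ : ℝ)) *
    (if Enc (x, r) = (w.2.1, w.2.2) then 1 else 0)

/-- The law of `(Z, C₁, U_ℓ)`, where `U_ℓ` is a uniform key independent of `(Z, C₁)`. -/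
noncomputable def idealLaw [Fintype 𝒳] (p : 𝒳 × 𝒵 → ℝ) (Enc : 𝒳 × ℛ → 𝒞₁ × (Fin ℓ → Bool))
    (w : 𝒵 × 𝒞₁ × (Fin ℓ → Bool)) : ℝ :=
  ∑ x : 𝒳, ∑ r : ℛ, (p (x, w.1) / ((Fintype.card ℛ : ℝ) * 2 ^ ℓ)) *
    (if (Enc (x, r)).1 = w.2.1 then 1 else 0)

theorem jointLaw_nonneg {p : 𝒳 × 𝒵 → ℝ} (hp : ∀ w, 0 ≤ p w) (t : 𝒳 × 𝒵 × ℛ) :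
    0 ≤ jointLaw p t :=
  div_nonneg (hp _) (Nat.cast_nonneg _)

variable [Fintype 𝒳] [Fintype 𝒵]

theorem sum_jointLaw [Nonempty ℛ] {p : 𝒳 × 𝒵 → ℝ} (hsum : ∑ w, p w = 1) :
    ∑ t : 𝒳 × 𝒵 × ℛ, jointLaw p t = 1 := by
  have hcard : (Fintype.card ℛ : ℝ) ≠ 0 := Nat.cast_ne_zero.mpr Fintype.card_ne_zero
  simp only [jointLaw, Fintype.sum_prod_type, Finset.sum_const, Finset.card_univ, nsmul_eq_mul]
  simp [mul_div_cancel₀ _ hcard, ← Fintype.sum_prod_type, hsum]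

theorem realLaw_eq_sum (p : 𝒳 × 𝒵 → ℝ) (Enc : 𝒳 × ℛ → 𝒞₁ × (Fin ℓ → Bool))
    (w : 𝒵 × 𝒞₁ × (Fin ℓ → Bool)) :
    realLaw p Enc w = ∑ t, jointLaw p t * if (t.2.1, Enc (t.1, t.2.2)) = w then 1 else 0 := by
  simp [realLaw, jointLaw, Fintype.sum_prod_type, Prod.ext_iff, ite_and, Finset.sum_ite_eq']

theorem idealLaw_eq_sum (p : 𝒳 × 𝒵 → ℝ) (Enc : 𝒳 × ℛ → 𝒞₁ × (Fin ℓ → Bool))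
    (w : 𝒵 × 𝒞₁ × (Fin ℓ → Bool)) :
    idealLaw p Enc w = ∑ t : (𝒳 × 𝒵 × ℛ) × (Fin ℓ → Bool),
      jointLaw p t.1 / 2 ^ ℓ * if (t.1.2.1, (Enc (t.1.1, t.1.2.2)).1, t.2) = w then 1 else 0 := by
  simp [idealLaw, jointLaw, Fintype.sum_prod_type, Prod.ext_iff, ite_and, Finset.sum_ite_eq',
    div_div]

variable [Fintype 𝒞₁]

theorem sum_realLaw_mul (p : 𝒳 × 𝒵 → ℝ) (Enc : 𝒳 × ℛ → 𝒞₁ × (Fin ℓ → Bool))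
    (h : 𝒵 × 𝒞₁ × (Fin ℓ → Bool) → ℝ) :
    ∑ w, realLaw p Enc w * h w = ∑ t, jointLaw p t * h (t.2.1, Enc (t.1, t.2.2)) := by
  simp only [realLaw_eq_sum]
  exact sum_pushforward_mul (jointLaw p) (fun t => (t.2.1, Enc (t.1, t.2.2))) h

theorem sum_idealLaw_mul (p : 𝒳 × 𝒵 → ℝ) (Enc : 𝒳 × ℛ → 𝒞₁ × (Fin ℓ → Bool))
    (h : 𝒵 × 𝒞₁ × (Fin ℓ → Bool) → ℝ) :
    ∑ w, idealLaw p Enc w * h w =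
      ∑ t, jointLaw p t * ∑ k, 1 / (2 ^ ℓ : ℝ) * h (t.2.1, (Enc (t.1, t.2.2)).1, k) := by
  simp only [idealLaw_eq_sum]
  rw [sum_pushforward_mul (fun t : (𝒳 × 𝒵 × ℛ) × (Fin ℓ → Bool) => jointLaw p t.1 / 2 ^ ℓ)
    (fun t => (t.1.2.1, (Enc (t.1.1, t.1.2.2)).1, t.2)) h, Fintype.sum_prod_type]
  simp only [Finset.mul_sum, ← mul_assoc, mul_one_div]

theorem sum_realLaw_eq_sum_idealLaw (p : 𝒳 × 𝒵 → ℝ) (Enc : 𝒳 × ℛ → 𝒞₁ × (Fin ℓ → Bool)) :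
    ∑ w, realLaw p Enc w = ∑ w, idealLaw p Enc w := by
  have hunif : ∑ _k : Fin ℓ → Bool, 1 / (2 ^ ℓ : ℝ) = 1 := by simp
  have hreal := sum_realLaw_mul p Enc 1
  have hideal := sum_idealLaw_mul p Enc 1
  simp only [Pi.one_apply, mul_one, hunif] at hreal hideal
  rw [hreal, hideal]

end KEM

/-- The probability, over the challenge bit `b`, that `A₂` outputs `b` when `Z = z`, `C₁ = c₁`
and the DEM key is `k`, for `w = (z, c₁, k)`. -/
noncomputable def guessProb {𝒵 𝒞₁ 𝒞₂ ℳ 𝒮t K : Type*} (D : K → ℳ → 𝒞₂)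
    (A₁ : 𝒵 → ℳ × ℳ × 𝒮t) (A₂ : 𝒮t × 𝒞₁ × 𝒞₂ → Bool) (w : 𝒵 × 𝒞₁ × K) : ℝ :=
  (1 / 2) * (if A₂ ((A₁ w.1).2.2, w.2.1, D w.2.2 (A₁ w.1).1) = false then 1 else 0)
    + (1 / 2) * (if A₂ ((A₁ w.1).2.2, w.2.1, D w.2.2 (A₁ w.1).2.1) = true then 1 else 0)

section guessProb

variable {𝒵 𝒞₁ 𝒞₂ ℳ 𝒮t K : Type*} (D : K → ℳ → 𝒞₂) (A₁ : 𝒵 → ℳ × ℳ × 𝒮t)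
  (A₂ : 𝒮t × 𝒞₁ × 𝒞₂ → Bool) (w : 𝒵 × 𝒞₁ × K)

theorem guessProb_nonneg : 0 ≤ guessProb D A₁ A₂ w := by
  unfold guessProb; split_ifs <;> norm_num

theorem guessProb_le_one : guessProb D A₁ A₂ w ≤ 1 := by
  unfold guessProb; split_ifs <;> norm_num

end guessProb

theorem hybrid_encryption_ind_ot_general
    {𝒳 𝒵 ℛ 𝒞₁ 𝒞₂ ℳ 𝒮t : Type*}
    [Fintype 𝒳] [Fintype 𝒵] [Fintype ℛ] [Fintype 𝒞₁]
    [Nonempty ℛ]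
    (ℓ : ℕ)
    (Enc : 𝒳 × ℛ → 𝒞₁ × (Fin ℓ → Bool))  -- iKEM encapsulation
    (D : (Fin ℓ → Bool) → ℳ → 𝒞₂)        -- deterministic DEM encryption
    (p : 𝒳 × 𝒵 → ℝ) (hp : ∀ w, 0 ≤ p w) (hsum : ∑ w : 𝒳 × 𝒵, p w = 1)
    (σ σ' : ℝ)
    -- (i) IND-OT security of the iKEM: SD((Z, C₁, K); (Z, C₁, U_ℓ)) ≤ σ
    (hKEM : SD
      (fun w : 𝒵 × 𝒞₁ × (Fin ℓ → Bool) =>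
        ∑ x : 𝒳, ∑ r : ℛ, (p (x, w.1) / (Fintype.card ℛ : ℝ)) *
          (if Enc (x, r) = (w.2.1, w.2.2) then 1 else 0))
      (fun w : 𝒵 × 𝒞₁ × (Fin ℓ → Bool) =>
        ∑ x : 𝒳, ∑ r : ℛ, (p (x, w.1) / ((Fintype.card ℛ : ℝ) * 2 ^ ℓ)) *
          (if (Enc (x, r)).1 = w.2.1 then 1 else 0))
      ≤ σ)
    -- (ii) IND-OT security of the DEM under a uniform key
    (hDEM : ∀ m₀ m₁ : ℳ, ∀ f : 𝒞₂ → Bool,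
      |(∑ k : Fin ℓ → Bool, (1 / (2 ^ ℓ : ℝ)) *
          ((1 / 2) * (if f (D k m₀) = false then 1 else 0)
            + (1 / 2) * (if f (D k m₁) = true then 1 else 0))) - 1 / 2| ≤ σ') :
    -- conclusion: every one-time adversary (A₁, A₂) has advantage ≤ σ + σ'
    ∀ (A₁ : 𝒵 → ℳ × ℳ × 𝒮t) (A₂ : 𝒮t × 𝒞₁ × 𝒞₂ → Bool),
      |(∑ x : 𝒳, ∑ z : 𝒵, ∑ r : ℛ, (p (x, z) / (Fintype.card ℛ : ℝ)) *
          ((1 / 2) * (if A₂ ((A₁ z).2.2, (Enc (x, r)).1,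
                D (Enc (x, r)).2 (A₁ z).1) = false then 1 else 0)
            + (1 / 2) * (if A₂ ((A₁ z).2.2, (Enc (x, r)).1,
                D (Enc (x, r)).2 (A₁ z).2.1) = true then 1 else 0))) - 1 / 2|
        ≤ σ + σ' := by
  intro A₁ A₂
  set g := guessProb D A₁ A₂
  have hKEMgap : |∑ w, KEM.realLaw p Enc w * g w - ∑ w, KEM.idealLaw p Enc w * g w| ≤ σ :=
    (abs_sum_mul_sub_sum_mul_le_SD _ _ g (KEM.sum_realLaw_eq_sum_idealLaw p Enc)
      (guessProb_nonneg D A₁ A₂) (guessProb_le_one D A₁ A₂)).trans hKEM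
  have hDEMgap : |∑ w, KEM.idealLaw p Enc w * g w - 1 / 2| ≤ σ' := by
    rw [KEM.sum_idealLaw_mul]
    refine abs_sum_mul_sub_le_of_forall_abs_sub_le (KEM.jointLaw_nonneg hp)
      (KEM.sum_jointLaw hsum) fun ⟨x, z, r⟩ => ?_
    exact hDEM (A₁ z).1 (A₁ z).2.1 fun c₂ => A₂ ((A₁ z).2.2, (Enc (x, r)).1, c₂)
  calc _ = |∑ w, KEM.realLaw p Enc w * g w - 1 / 2| := by
        rw [KEM.sum_realLaw_mul]; simp only [Fintype.sum_prod_type]; rfl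
    _ ≤ σ + σ' := (abs_sub_le _ _ _).trans (add_le_add hKEMgap hDEMgap)

/-- one-time composition: IND-OT iKEM + IND-OT DEM ⇒ IND-OT hybrid
encryption: if the iKEM key `K` produced by `Enc(X, R)` is σ-close to uniform given
`(Z, C₁)`, and the DEM `D` is σ′-one-time secure, then every one-time adversary `(A₁, A₂)`
against the hybrid encryption has advantage at most `σ + σ′`. -/
theorem hybrid_encryption_ind_ot
    {𝒳 𝒵 ℛ 𝒞₁ 𝒞₂ ℳ 𝒮t : Type*}
    [Fintype 𝒳] [Fintype 𝒵] [Fintype ℛ] [Fintype 𝒞₁] [Fintype 𝒞₂] [Fintype ℳ] [Fintype 𝒮t]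
    [Nonempty ℛ]
    (ℓ : ℕ)
    (Enc : 𝒳 × ℛ → 𝒞₁ × (Fin ℓ → Bool))  -- iKEM encapsulation
    (D : (Fin ℓ → Bool) → ℳ → 𝒞₂)        -- deterministic DEM encryption
    (p : 𝒳 × 𝒵 → ℝ) (hp : ∀ w, 0 ≤ p w) (hsum : ∑ w : 𝒳 × 𝒵, p w = 1)
    (σ σ' : ℝ)
    -- (i) IND-OT security of the iKEM: SD((Z, C₁, K); (Z, C₁, U_ℓ)) ≤ σ
    (hKEM : SD
      (fun w : 𝒵 × 𝒞₁ × (Fin ℓ → Bool) =>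
        ∑ x : 𝒳, ∑ r : ℛ, (p (x, w.1) / (Fintype.card ℛ : ℝ)) *
          (if Enc (x, r) = (w.2.1, w.2.2) then 1 else 0))
      (fun w : 𝒵 × 𝒞₁ × (Fin ℓ → Bool) =>
        ∑ x : 𝒳, ∑ r : ℛ, (p (x, w.1) / ((Fintype.card ℛ : ℝ) * 2 ^ ℓ)) *
          (if (Enc (x, r)).1 = w.2.1 then 1 else 0))
      ≤ σ)
    -- (ii) IND-OT security of the DEM under a uniform key
    (hDEM : ∀ m₀ m₁ : ℳ, ∀ f : 𝒞₂ → Bool,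
      |(∑ k : Fin ℓ → Bool, (1 / (2 ^ ℓ : ℝ)) *
          ((1 / 2) * (if f (D k m₀) = false then 1 else 0)
            + (1 / 2) * (if f (D k m₁) = true then 1 else 0))) - 1 / 2| ≤ σ') :
    -- conclusion: every one-time adversary (A₁, A₂) has advantage ≤ σ + σ'
    ∀ (A₁ : 𝒵 → ℳ × ℳ × 𝒮t) (A₂ : 𝒮t × 𝒞₁ × 𝒞₂ → Bool),
      |(∑ x : 𝒳, ∑ z : 𝒵, ∑ r : ℛ, (p (x, z) / (Fintype.card ℛ : ℝ)) *
          ((1 / 2) * (if A₂ ((A₁ z).2.2, (Enc (x, r)).1,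
                D (Enc (x, r)).2 (A₁ z).1) = false then 1 else 0)
            + (1 / 2) * (if A₂ ((A₁ z).2.2, (Enc (x, r)).1,
                D (Enc (x, r)).2 (A₁ z).2.1) = true then 1 else 0))) - 1 / 2|
        ≤ σ + σ' :=
  hybrid_encryption_ind_ot_general ℓ Enc D p hp hsum σ σ' hKEM hDEM
end
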